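/- arXiv:2404.03839 — 5 statements merged into one kernel-verified Lean document; each statement's English description precedes it below -/
import Mathlib

section
/- Along any nonnegative solution of the system, the function Z(t) = (1 + m_s Y_{B/s}/k_d)·X(t) + α·B(t) + α·Y_{B/s}·s(t) satisfies dZ/dt = K_H·[(α Y_{B/s} - 1) - m_s Y_{B/s}/k_d]·X(t), and in particular Z is nonincreasing. -/
/-!
The weights of `Z` make every `B`-term of `dZ/dt` cancel in pairs: `α μ(s) B` between the `B`- and
`s`-equations, `α k_d B` between the `X`- and `B`-equations, and `α m_s Y B` between the `X`- and
`s`-equations. What remains is `K_H c X` with `c = (α Y - 1) - m_s Y/k_d < 0`, which is nonpositive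
on nonnegative solutions, so `Z` is nonincreasing by the mean value theorem.
-/

open Set

noncomputable def lyapunovZ (α kd YB ms : ℝ) (X B S : ℝ → ℝ) : ℝ → ℝ :=
  fun τ => (1 + ms * YB / kd) * X τ + α * B τ + α * YB * S τ

theorem hasDerivAt_lyapunovZ {μ : ℝ → ℝ} {KH α kd YB ms t : ℝ} {X B S : ℝ → ℝ}
    (hkd : kd ≠ 0) (hYB : YB ≠ 0)
    (hX : HasDerivAt X (-KH * X t + α * kd * B t) t)
    (hB : HasDerivAt B ((μ (S t) - kd) * B t) t)
    (hS : HasDerivAt S (-(μ (S t) / YB + ms) * B t + KH * X t) t) :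
    HasDerivAt (lyapunovZ α kd YB ms X B S) (KH * ((α * YB - 1) - ms * YB / kd) * X t) t := by
  refine (((hX.const_mul (1 + ms * YB / kd)).add (hB.const_mul α)).add
    (hS.const_mul (α * YB))).congr_deriv ?_
  field_simp
  ring

theorem lyapunov_rate_neg {α kd YB ms : ℝ} (hα1 : α < 1) (hkd : 0 < kd)
    (hYB : 0 < YB) (hYB1 : YB < 1) (hms : 0 < ms) :
    (α * YB - 1) - ms * YB / kd < 0 := by
  have hαYB : α * YB < 1 := by nlinarith
  have : 0 < ms * YB / kd := by positivity
  linarith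

theorem antitoneOn_Ici_of_hasDerivAt_nonpos {f f' : ℝ → ℝ} {a : ℝ}
    (hf : ∀ t, a ≤ t → HasDerivAt f (f' t) t) (hf' : ∀ t, a ≤ t → f' t ≤ 0) :
    AntitoneOn f (Ici a) := by
  refine antitoneOn_of_hasDerivWithinAt_nonpos (f' := f') (convex_Ici a)
    (fun t ht => (hf t ht).continuousAt.continuousWithinAt) (fun t ht => ?_) (fun t ht => ?_)
  all_goals rw [interior_Ici] at ht
  · exact (hf t (le_of_lt ht)).hasDerivWithinAt
  · exact hf' t ht.le

theorem stmt_8_general (μ : ℝ → ℝ) (KH α kd YB ms : ℝ) (X B S : ℝ → ℝ)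
    (hKH : 0 < KH) (hα1 : α < 1) (hkd : 0 < kd)
    (hYB : 0 < YB) (hYB1 : YB < 1) (hms : 0 < ms)
    (hpos : ∀ t, 0 ≤ t → 0 ≤ X t ∧ 0 ≤ B t ∧ 0 ≤ S t)
    (hODE : ∀ t, 0 ≤ t →
      HasDerivAt X (-KH * X t + α * kd * B t) t ∧
      HasDerivAt B ((μ (S t) - kd) * B t) t ∧
      HasDerivAt S (-(μ (S t) / YB + ms) * B t + KH * X t) t) :
    (∀ t, 0 ≤ t →
      HasDerivAt (fun τ => (1 + ms * YB / kd) * X τ + α * B τ + α * YB * S τ)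
        (KH * ((α * YB - 1) - ms * YB / kd) * X t) t) ∧
    (∀ t₁ t₂, 0 ≤ t₁ → t₁ ≤ t₂ →
      (1 + ms * YB / kd) * X t₂ + α * B t₂ + α * YB * S t₂ ≤
        (1 + ms * YB / kd) * X t₁ + α * B t₁ + α * YB * S t₁) := by
  have hZ : ∀ t, 0 ≤ t → HasDerivAt (lyapunovZ α kd YB ms X B S)
      (KH * ((α * YB - 1) - ms * YB / kd) * X t) t := fun t ht =>
    let ⟨hX, hB, hS⟩ := hODE t ht
    hasDerivAt_lyapunovZ hkd.ne' hYB.ne' hX hB hS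
  have hrate : KH * ((α * YB - 1) - ms * YB / kd) ≤ 0 :=
    mul_nonpos_of_nonneg_of_nonpos hKH.le (lyapunov_rate_neg hα1 hkd hYB hYB1 hms).le
  have hanti : AntitoneOn (lyapunovZ α kd YB ms X B S) (Ici 0) :=
    antitoneOn_Ici_of_hasDerivAt_nonpos hZ fun t ht =>
      mul_nonpos_of_nonpos_of_nonneg hrate (hpos t ht).1
  exact ⟨hZ, fun t₁ t₂ ht₁ h12 => hanti ht₁ (ht₁.trans h12) h12⟩

/-- Along nonnegative solutions, `Z = (1 + m_s Y_{B/s}/k_d) X + α B + α Y_{B/s} s`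
satisfies `dZ/dt = K_H ((α Y_{B/s} - 1) - m_s Y_{B/s}/k_d) X`, and `Z` is
nonincreasing. -/
theorem stmt_8 (μ : ℝ → ℝ) (KH α kd YB ms : ℝ) (X B S : ℝ → ℝ)
    (hKH : 0 < KH) (hα0 : 0 ≤ α) (hα1 : α < 1) (hkd : 0 < kd)
    (hYB : 0 < YB) (hYB1 : YB < 1) (hms : 0 < ms)
    (hpos : ∀ t, 0 ≤ t → 0 ≤ X t ∧ 0 ≤ B t ∧ 0 ≤ S t)
    (hODE : ∀ t, 0 ≤ t →
      HasDerivAt X (-KH * X t + α * kd * B t) t ∧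
      HasDerivAt B ((μ (S t) - kd) * B t) t ∧
      HasDerivAt S (-(μ (S t) / YB + ms) * B t + KH * X t) t) :
    (∀ t, 0 ≤ t →
      HasDerivAt (fun τ => (1 + ms * YB / kd) * X τ + α * B τ + α * YB * S τ)
        (KH * ((α * YB - 1) - ms * YB / kd) * X t) t) ∧
    (∀ t₁ t₂, 0 ≤ t₁ → t₁ ≤ t₂ →
      (1 + ms * YB / kd) * X t₂ + α * B t₂ + α * YB * S t₂ ≤
        (1 + ms * YB / kd) * X t₁ + α * B t₁ + α * YB * S t₁) :=
  stmt_8_general μ KH α kd YB ms X B S hKH hα1 hkd hYB hYB1 hms hpos hODE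
end

section
/- Under the standing hypotheses (with α > 0), every solution of the four-dimensional system with nonnegative initial data satisfies X(t) → 0, B(t) → 0, s(t) → s* and P(t) → P* as t → +∞ for some finite s* ≥ 0 and P* ≥ P0, and s* ≤ s0 + [(1 + m_s Y_{B/s}/k_d)·X0 + α·B0] / (α·Y_{B/s}). -/
/-!
The substrate equivalent `W = s + X + B / Y_{B/s}` is a Lyapunov function:
`W' = -(m_s + k_d / Y_{B/s} - α k_d) B ≤ 0` and `W ≥ 0`, so `W` converges. Since
`B' ≥ -k_d B`, the biomass cannot collapse faster than exponentially, so the decrease of `W`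
over `[t, t + 1]` controls `B t`, and `B → 0`. Then `X → 0` because it solves
`X' = -K_H X + (forcing → 0)`, and `s = W - X - B / Y_{B/s}` tends to `lim W ≤ W 0`, which is
the bound on `s*`. Finally `P` is nondecreasing and `P' ≤ const · B = -const' · W'` (`μ` is
bounded on the compact range `[0, W 0]` of `s`), so `P` is bounded and converges.
-/

open Set Filter Topology Real

section Calculus

variable {f f' : ℝ → ℝ} {D : Set ℝ}

theorem monotoneOn_of_hasDerivAt_nonneg (hD : Convex ℝ D)
    (hf : ∀ x ∈ D, HasDerivAt f (f' x) x) (hf' : ∀ x ∈ D, 0 ≤ f' x) : MonotoneOn f D :=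
  monotoneOn_of_hasDerivWithinAt_nonneg hD
    (fun x hx => (hf x hx).continuousAt.continuousWithinAt)
    (fun x hx => (hf x (interior_subset hx)).hasDerivWithinAt)
    fun x hx => hf' x (interior_subset hx)

theorem antitoneOn_of_hasDerivAt_nonpos (hD : Convex ℝ D)
    (hf : ∀ x ∈ D, HasDerivAt f (f' x) x) (hf' : ∀ x ∈ D, f' x ≤ 0) : AntitoneOn f D :=
  antitoneOn_of_hasDerivWithinAt_nonpos hD
    (fun x hx => (hf x hx).continuousAt.continuousWithinAt)
    (fun x hx => (hf x (interior_subset hx)).hasDerivWithinAt)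
    fun x hx => hf' x (interior_subset hx)

end Calculus

section MonotoneConvergence

variable {ι α : Type*} [SemilatticeSup ι] [ConditionallyCompleteLinearOrder α]
  [TopologicalSpace α] [OrderTopology α] {f : ι → α} {a : ι}

theorem MonotoneOn.exists_tendsto_atTop (hf : MonotoneOn f (Ici a)) (hb : BddAbove (f '' Ici a)) :
    ∃ L, Tendsto f atTop (𝓝 L) := by
  have hg : Monotone fun t => f (a ⊔ t) := fun s t hst =>
    hf le_sup_left le_sup_left (sup_le_sup_left hst a)
  have hgb : BddAbove (range fun t => f (a ⊔ t)) :=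
    hb.mono (range_subset_iff.2 fun t => mem_image_of_mem f le_sup_left)
  refine ⟨_, (tendsto_atTop_ciSup hg hgb).congr' ?_⟩
  filter_upwards [eventually_ge_atTop a] with t ht
  rw [sup_eq_right.2 ht]

theorem AntitoneOn.exists_tendsto_atTop (hf : AntitoneOn f (Ici a)) (hb : BddBelow (f '' Ici a)) :
    ∃ L, Tendsto f atTop (𝓝 L) :=
  MonotoneOn.exists_tendsto_atTop (α := αᵒᵈ) hf hb

end MonotoneConvergence

section Decay

variable {f f' g : ℝ → ℝ} {D : Set ℝ} {a k : ℝ}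

theorem exp_neg_mul_le_of_neg_mul_le_deriv (hD : Convex ℝ D)
    (hf : ∀ x ∈ D, HasDerivAt f (f' x) x) (hf' : ∀ x ∈ D, -k * f x ≤ f' x) {x y : ℝ}
    (hx : x ∈ D) (hy : y ∈ D) (hxy : x ≤ y) :
    exp (-(k * (y - x))) * f x ≤ f y := by
  have hmono : MonotoneOn (fun t => f t * exp (k * t)) D := by
    refine monotoneOn_of_hasDerivAt_nonneg hD
      (fun t ht => (hf t ht).mul (((hasDerivAt_id' t).const_mul k).exp)) fun t ht => ?_
    have := hf' t ht
    have := exp_pos (k * t)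
    nlinarith
  have h := hmono hx hy hxy
  have hyx : exp (-(k * (y - x))) = exp (k * x) * exp (-(k * y)) := by
    rw [← exp_add]; ring_nf
  calc exp (-(k * (y - x))) * f x = f x * exp (k * x) * exp (-(k * y)) := by rw [hyx]; ring
    _ ≤ f y * exp (k * y) * exp (-(k * y)) := by gcongr
    _ = f y := by rw [mul_assoc, ← exp_add]; simp

theorem mul_exp_neg_le_sub_of_hasDerivAt {W b b' : ℝ → ℝ} {c t : ℝ} (hc : 0 ≤ c)
    (hk : 0 ≤ k) (hW : ∀ x ∈ Icc t (t + 1), HasDerivAt W (-(c * b x)) x)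
    (hb : ∀ x ∈ Icc t (t + 1), HasDerivAt b (b' x) x)
    (hb' : ∀ x ∈ Icc t (t + 1), -k * b x ≤ b' x) (hbt : 0 ≤ b t) :
    c * exp (-k) * b t ≤ W t - W (t + 1) := by
  have hts : t ∈ Icc t (t + 1) := left_mem_Icc.2 (by linarith)
  have hlower : ∀ x ∈ Icc t (t + 1), exp (-k) * b t ≤ b x := fun x hx =>
    calc exp (-k) * b t ≤ exp (-(k * (x - t))) * b t := by
          gcongr; nlinarith [hx.1, hx.2]
      _ ≤ b x := exp_neg_mul_le_of_neg_mul_le_deriv (convex_Icc _ _) hb hb' hts hx hx.1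
  have hanti : AntitoneOn (fun x => W x + c * exp (-k) * b t * x) (Icc t (t + 1)) :=
    antitoneOn_of_hasDerivAt_nonpos (convex_Icc _ _)
      (fun x hx => (hW x hx).add ((hasDerivAt_id' x).const_mul _)) fun x hx => by
        nlinarith [mul_le_mul_of_nonneg_left (hlower x hx) hc]
  have := hanti hts (right_mem_Icc.2 (by linarith)) (by linarith)
  simp only at this
  linarith

theorem tendsto_zero_of_tendsto_primitive {W b b' : ℝ → ℝ} {c L : ℝ} (hc : 0 < c)
    (hk : 0 ≤ k) (hW : ∀ x ∈ Ici a, HasDerivAt W (-(c * b x)) x)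
    (hWL : Tendsto W atTop (𝓝 L))
    (hb : ∀ x ∈ Ici a, HasDerivAt b (b' x) x) (hb' : ∀ x ∈ Ici a, -k * b x ≤ b' x)
    (hb0 : ∀ x ∈ Ici a, 0 ≤ b x) : Tendsto b atTop (𝓝 0) := by
  have hgap : Tendsto (fun t => (W t - W (t + 1)) / (c * exp (-k))) atTop (𝓝 0) := by
    simpa using (hWL.sub (hWL.comp (tendsto_atTop_add_const_right _ 1 tendsto_id))).div_const
      (c * exp (-k))
  refine squeeze_zero' (eventually_atTop.2 ⟨a, hb0⟩)
    (eventually_atTop.2 ⟨a, fun t ht => ?_⟩) hgap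
  have hsub : Icc t (t + 1) ⊆ Ici a := fun x hx => le_trans ht hx.1
  rw [le_div_iff₀ (by positivity), mul_comm]
  exact mul_exp_neg_le_sub_of_hasDerivAt hc.le hk (fun x hx => hW x (hsub hx))
    (fun x hx => hb x (hsub hx)) (fun x hx => hb' x (hsub hx)) (hb0 t ht)

theorem eventually_lt_of_hasDerivAt_neg_mul_add (hk : 0 < k)
    (hf : ∀ x ∈ Ici a, HasDerivAt f (-k * f x + g x) x) (hg : Tendsto g atTop (𝓝 0))
    {ε : ℝ} (hε : 0 < ε) : ∀ᶠ t in atTop, f t < ε := by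
  obtain ⟨T, hT⟩ :=
    eventually_atTop.1 (hg.eventually (ge_mem_nhds (by positivity : 0 < k * ε / 2)))
  set T' := max a T
  have hanti : AntitoneOn (fun t => exp (k * t) * (f t - ε / 2)) (Ici T') :=
    antitoneOn_of_hasDerivAt_nonpos (convex_Ici _)
      (fun t ht => (((hasDerivAt_id' t).const_mul k).exp).mul
        ((hf t (mem_Ici.2 ((le_max_left _ _).trans ht))).sub_const (ε / 2))) fun t ht => by
        have := hT t (le_trans (le_max_right _ _) ht)
        have := exp_pos (k * t)
        nlinarith
  set C := exp (k * T') * (f T' - ε / 2)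
  have hbound : ∀ t ∈ Ici T', f t - ε / 2 ≤ C * exp (-(k * t)) := fun t ht => by
    have h := mul_le_mul_of_nonneg_right (hanti self_mem_Ici ht ht) (exp_pos (-(k * t))).le
    rwa [mul_comm, ← mul_assoc, ← exp_add, neg_add_cancel, exp_zero, one_mul] at h
  have hdecay : Tendsto (fun t => C * exp (-(k * t))) atTop (𝓝 0) := by
    simpa using ((tendsto_exp_atBot.comp
      (tendsto_neg_atTop_atBot.comp (tendsto_id.const_mul_atTop hk))).const_mul C)
  filter_upwards [hdecay.eventually (gt_mem_nhds (half_pos hε)), eventually_ge_atTop T']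
    with t hCt hTt
  linarith [hbound t hTt]

theorem tendsto_zero_of_hasDerivAt_neg_mul_add (hk : 0 < k)
    (hf : ∀ x ∈ Ici a, HasDerivAt f (-k * f x + g x) x) (hg : Tendsto g atTop (𝓝 0)) :
    Tendsto f atTop (𝓝 0) := by
  refine tendsto_order.2
    ⟨fun ε hε => ?_, fun ε hε => eventually_lt_of_hasDerivAt_neg_mul_add hk hf hg hε⟩
  have hneg : ∀ x ∈ Ici a, HasDerivAt (fun t => -f t) (-k * -f x + -g x) x := fun x hx =>
    (hf x hx).neg.congr_deriv (by ring)
  filter_upwards [eventually_lt_of_hasDerivAt_neg_mul_add hk hneg (by simpa using hg.neg)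
    (neg_pos.2 hε)] with t ht
  linarith

end Decay

theorem exists_le_tendsto_of_hasDerivAt_le_mul {P p W b : ℝ → ℝ} {a c K m : ℝ} (hc : 0 < c)
    (hK : 0 ≤ K) (hP : ∀ x ∈ Ici a, HasDerivAt P (p x) x) (hp : ∀ x ∈ Ici a, 0 ≤ p x)
    (hpb : ∀ x ∈ Ici a, p x ≤ K * b x) (hW : ∀ x ∈ Ici a, HasDerivAt W (-(c * b x)) x)
    (hWm : ∀ x ∈ Ici a, m ≤ W x) : ∃ L, P a ≤ L ∧ Tendsto P atTop (𝓝 L) := by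
  have hanti : AntitoneOn (fun x => P x + K / c * W x) (Ici a) :=
    antitoneOn_of_hasDerivAt_nonpos (convex_Ici a)
      (fun x hx => (hP x hx).add ((hW x hx).const_mul _))
      fun x hx => by
        have : K / c * -(c * b x) = -(K * b x) := by field_simp
        linarith [hpb x hx]
  have hmono := monotoneOn_of_hasDerivAt_nonneg (convex_Ici a) hP hp
  obtain ⟨L, hL⟩ := hmono.exists_tendsto_atTop ⟨P a + K / c * W a - K / c * m, by
    rintro _ ⟨x, hx, rfl⟩
    have := mul_le_mul_of_nonneg_left (hWm x hx) (div_nonneg hK hc.le)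
    linarith [hanti self_mem_Ici hx hx]⟩
  exact ⟨L, ge_of_tendsto hL (eventually_atTop.2 ⟨a, fun x hx => hmono self_mem_Ici hx hx⟩),
    hL⟩

theorem add_div_le_of_mul_le_one {x b r α y : ℝ} (hx : 0 ≤ x) (hr : 0 ≤ r) (hα : 0 < α)
    (hy : 0 < y) (hαy : α * y ≤ 1) : x + b / y ≤ ((1 + r) * x + α * b) / (α * y) := by
  have hb : b / y * (α * y) = α * b := by field_simp
  rw [le_div_iff₀ (by positivity), add_mul, hb]
  nlinarith

noncomputable def totalSubstrate (X B S : ℝ → ℝ) (YB : ℝ) (t : ℝ) : ℝ :=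
  S t + X t + B t / YB

theorem le_totalSubstrate {X B S : ℝ → ℝ} {YB t : ℝ} (hYB : 0 ≤ YB) (hX : 0 ≤ X t)
    (hB : 0 ≤ B t) : S t ≤ totalSubstrate X B S YB t := by
  have := div_nonneg hB hYB
  simp only [totalSubstrate]
  linarith

theorem dissipation_pos {α kd YB ms : ℝ} (hms : 0 ≤ ms) (hkd : 0 < kd) (hYB : 0 < YB)
    (hαYB : α * YB < 1) : 0 < ms + kd / YB - α * kd := by
  have : α * kd < kd / YB := by rw [lt_div_iff₀ hYB]; nlinarith
  linarith

theorem hasDerivAt_totalSubstrate {μ X B S : ℝ → ℝ} {KH α kd YB ms t : ℝ} (hYB : YB ≠ 0)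
    (hX : HasDerivAt X (-KH * X t + α * kd * B t) t) (hB : HasDerivAt B ((μ (S t) - kd) * B t) t)
    (hS : HasDerivAt S (-(μ (S t) / YB + ms) * B t + KH * X t) t) :
    HasDerivAt (totalSubstrate X B S YB) (-((ms + kd / YB - α * kd) * B t)) t :=
  ((hS.add hX).add (hB.div_const YB)).congr_deriv (by field_simp; ring)

theorem exists_le_tendsto_product {μ S B P W : ℝ → ℝ} {K : Set ℝ} {YP mP a c : ℝ}
    (hK : IsCompact K) (hμ : ContinuousOn μ K) (hμK : ∀ x ∈ K, 0 ≤ μ x) (hYP : 0 ≤ YP)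
    (hmP : 0 ≤ mP) (hSK : ∀ t ∈ Ici a, S t ∈ K) (hB : ∀ t ∈ Ici a, 0 ≤ B t)
    (hP : ∀ t ∈ Ici a, HasDerivAt P ((μ (S t) / YP + mP) * B t) t) (hc : 0 < c)
    (hW : ∀ t ∈ Ici a, HasDerivAt W (-(c * B t)) t) (hWnn : ∀ t ∈ Ici a, 0 ≤ W t) :
    ∃ L, P a ≤ L ∧ Tendsto P atTop (𝓝 L) := by
  obtain ⟨C, hC⟩ := hK.bddAbove_image hμ
  have hμC : ∀ t ∈ Ici a, μ (S t) ≤ C := fun t ht => hC (mem_image_of_mem μ (hSK t ht))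
  have hC0 : 0 ≤ C := (hμK _ (hSK a self_mem_Ici)).trans (hμC a self_mem_Ici)
  exact exists_le_tendsto_of_hasDerivAt_le_mul hc (by positivity : 0 ≤ C / YP + mP) hP
    (fun t ht => mul_nonneg (by have := hμK _ (hSK t ht); positivity) (hB t ht))
    (fun t ht => mul_le_mul_of_nonneg_right (by gcongr; exact hμC t ht) (hB t ht)) hW hWnn

theorem stmt_12_general (μ : ℝ → ℝ) (KH α kd YB YP ms mP : ℝ) (X B S P : ℝ → ℝ)
    (hμ : ContDiff ℝ 1 μ) (hμ0 : μ 0 = 0) (hμpos : ∀ x, 0 < x → 0 < μ x)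
    (hkd : 0 < kd)
    (hKH : 0 < KH) (hα0 : 0 < α) (hα1 : α < 1)
    (hYB : 0 < YB) (hYB1 : YB < 1) (hYP : 0 < YP)
    (hms : 0 < ms) (hmP : 0 < mP)
    (hpos : ∀ t, 0 ≤ t → 0 ≤ X t ∧ 0 ≤ B t ∧ 0 ≤ S t ∧ 0 ≤ P t)
    (hODE : ∀ t, 0 ≤ t →
      HasDerivAt X (-KH * X t + α * kd * B t) t ∧
      HasDerivAt B ((μ (S t) - kd) * B t) t ∧
      HasDerivAt S (-(μ (S t) / YB + ms) * B t + KH * X t) t ∧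
      HasDerivAt P ((μ (S t) / YP + mP) * B t) t) :
    ∃ sstar Pstar : ℝ,
      Filter.Tendsto X Filter.atTop (nhds 0) ∧
      Filter.Tendsto B Filter.atTop (nhds 0) ∧
      Filter.Tendsto S Filter.atTop (nhds sstar) ∧
      Filter.Tendsto P Filter.atTop (nhds Pstar) ∧
      0 ≤ sstar ∧ P 0 ≤ Pstar ∧
      sstar ≤ S 0 + ((1 + ms * YB / kd) * X 0 + α * B 0) / (α * YB) := by
  set W := totalSubstrate X B S YB
  have hαYB : α * YB < 1 := mul_lt_one_of_nonneg_of_lt_one_left hα0.le hα1 hYB1.le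
  have hc := dissipation_pos hms.le hkd hYB hαYB
  have hμnn : ∀ x ∈ Ici 0, 0 ≤ μ x := fun x hx =>
    (eq_or_lt_of_le hx).elim (fun h => by rw [← h, hμ0]) fun h => (hμpos x h).le
  have hW := fun t ht =>
    hasDerivAt_totalSubstrate hYB.ne' (hODE t ht).1 (hODE t ht).2.1 (hODE t ht).2.2.1
  have hS : ∀ t ∈ Ici 0, 0 ≤ S t ∧ S t ≤ W t := fun t ht =>
    ⟨(hpos t ht).2.2.1, le_totalSubstrate hYB.le (hpos t ht).1 (hpos t ht).2.1⟩
  have hWnn : ∀ t ∈ Ici 0, 0 ≤ W t := fun t ht => (hS t ht).1.trans (hS t ht).2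
  have hWanti : AntitoneOn W (Ici 0) := antitoneOn_of_hasDerivAt_nonpos (convex_Ici 0) hW
    fun t ht => neg_nonpos.2 (mul_nonneg hc.le (hpos t ht).2.1)
  obtain ⟨L, hWL⟩ :=
    hWanti.exists_tendsto_atTop ⟨0, by rintro _ ⟨t, ht, rfl⟩; exact hWnn t ht⟩
  have hBL : Tendsto B atTop (𝓝 0) :=
    tendsto_zero_of_tendsto_primitive hc hkd.le hW hWL (fun t ht => (hODE t ht).2.1)
      (fun t ht => by nlinarith [hμnn _ (hpos t ht).2.2.1, (hpos t ht).2.1])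
      fun t ht => (hpos t ht).2.1
  have hXL : Tendsto X atTop (𝓝 0) := tendsto_zero_of_hasDerivAt_neg_mul_add hKH
    (fun t ht => (hODE t ht).1) (by simpa using hBL.const_mul (α * kd))
  have hSL : Tendsto S atTop (𝓝 L) := by
    simpa using ((hWL.sub hXL).sub (hBL.div_const YB)).congr fun t => by
      simp only [W, totalSubstrate]; ring
  have hW0 : ∀ t ∈ Ici 0, W t ≤ W 0 := fun t ht => hWanti self_mem_Ici ht ht
  obtain ⟨Pstar, hP0, hPL⟩ := exists_le_tendsto_product isCompact_Icc
    hμ.continuous.continuousOn (fun x hx => hμnn x hx.1) hYP.le hmP.le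
    (fun t ht => ⟨(hS t ht).1, (hS t ht).2.trans (hW0 t ht)⟩)
    (fun t ht => (hpos t ht).2.1) (fun t ht => (hODE t ht).2.2.2) hc hW hWnn
  refine ⟨L, Pstar, hXL, hBL, hSL, hPL, ge_of_tendsto hWL (eventually_atTop.2 ⟨0, hWnn⟩), hP0,
    (le_of_tendsto hWL (eventually_atTop.2 ⟨0, hW0⟩)).trans ?_⟩
  rw [show W 0 = S 0 + (X 0 + B 0 / YB) by simp only [W, totalSubstrate]; ring]
  gcongr
  exact add_div_le_of_mul_le_one (hpos 0 le_rfl).1 (by positivity) hα0 hYB hαYB.le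

/-- Convergence theorem: every nonnegative solution of the Trichoderma system
satisfies `X(t) → 0`, `B(t) → 0`, `s(t) → s*`, `P(t) → P*` with `s* ≥ 0`,
`P* ≥ P0`, and `s* ≤ s0 + ((1 + m_s Y_{B/s}/k_d) X0 + α B0)/(α Y_{B/s})`. -/
theorem stmt_12 (μ : ℝ → ℝ) (KH α kd YB YP ms mP : ℝ) (X B S P : ℝ → ℝ)
    (hμ : ContDiff ℝ 1 μ) (hμ0 : μ 0 = 0) (hμpos : ∀ x, 0 < x → 0 < μ x)
    (hkd : 0 < kd) (hkdmax : ∃ x, kd < μ x)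
    (hKH : 0 < KH) (hα0 : 0 < α) (hα1 : α < 1)
    (hYB : 0 < YB) (hYB1 : YB < 1) (hYP : 0 < YP) (hYP1 : YP < 1)
    (hms : 0 < ms) (hmP : 0 < mP)
    (hinit : 0 ≤ X 0 ∧ 0 ≤ B 0 ∧ 0 ≤ S 0 ∧ 0 ≤ P 0)
    (hpos : ∀ t, 0 ≤ t → 0 ≤ X t ∧ 0 ≤ B t ∧ 0 ≤ S t ∧ 0 ≤ P t)
    (hODE : ∀ t, 0 ≤ t →
      HasDerivAt X (-KH * X t + α * kd * B t) t ∧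
      HasDerivAt B ((μ (S t) - kd) * B t) t ∧
      HasDerivAt S (-(μ (S t) / YB + ms) * B t + KH * X t) t ∧
      HasDerivAt P ((μ (S t) / YP + mP) * B t) t) :
    ∃ sstar Pstar : ℝ,
      Filter.Tendsto X Filter.atTop (nhds 0) ∧
      Filter.Tendsto B Filter.atTop (nhds 0) ∧
      Filter.Tendsto S Filter.atTop (nhds sstar) ∧
      Filter.Tendsto P Filter.atTop (nhds Pstar) ∧
      0 ≤ sstar ∧ P 0 ≤ Pstar ∧
      sstar ≤ S 0 + ((1 + ms * YB / kd) * X 0 + α * B 0) / (α * YB) :=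
  stmt_12_general μ KH α kd YB YP ms mP X B S P hμ hμ0 hμpos hkd hKH hα0 hα1 hYB hYB1 hYP hms hmP
    hpos hODE
end

section
/- The limit of the product satisfies P* = P0 + a·B0 + b·(X0 + s0 - s*), where a = (Y_{P/s} m_P + k_d Y_{B/s}(α - m_s/k_d)) / (k_d Y_{P/s} [1 - Y_{B/s}(α - m_s/k_d)]) and b = Y_{B/s}(Y_{P/s} m_P + k_d) / (k_d Y_{P/s} [1 - Y_{B/s}(α - m_s/k_d)]), and b > 0. -/
open Set Filter Topology Real

/-!
`a` and `b` are exactly the coefficients for which `P + b X + a B + b S` is a first integral.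
Since `P' ≥ mP B` and `B` decays at rate at most `kd`, the increments `P (t + 1) - P t` dominate
a fixed multiple of `B t`; as `P` converges, `B → 0`. The first integral then makes `X` converge,
and a convergent function whose derivative `-KH X + α kd B` converges has limit derivative `0`,
so `X → 0`. Letting `t → ∞` in the first integral gives the formula.
-/

theorem eq_zero_of_tendsto_of_tendsto_deriv {f f' : ℝ → ℝ} {L l : ℝ}
    (hderiv : ∀ᶠ t in atTop, HasDerivAt f (f' t) t)
    (hf : Tendsto f atTop (𝓝 L)) (hf' : Tendsto f' atTop (𝓝 l)) : l = 0 := by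
  obtain ⟨T, hT⟩ := eventually_atTop.1 hderiv
  have hslope : ∀ t, T ≤ t → ∃ c ∈ Ioo t (t + 1), f' c = f (t + 1) - f t := fun t ht => by
    obtain ⟨c, hc, hfc⟩ := exists_hasDerivAt_eq_slope f f' (lt_add_one t)
      (fun x hx => (hT x (ht.trans hx.1)).continuousAt.continuousWithinAt)
      (fun x hx => hT x (ht.trans hx.1.le))
    exact ⟨c, hc, by simpa using hfc⟩
  choose! c hc hfc using hslope
  have hc_top : Tendsto c atTop atTop :=
    tendsto_atTop_mono' _ ((eventually_ge_atTop T).mono fun t ht => (hc t ht).1.le) tendsto_id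
  have hincr : Tendsto (fun t => f (t + 1) - f t) atTop (𝓝 0) := by
    simpa using (hf.comp (tendsto_atTop_add_const_right _ 1 tendsto_id)).sub hf
  refine tendsto_nhds_unique (hf'.comp hc_top) (hincr.congr' ?_)
  filter_upwards [eventually_ge_atTop T] with t ht using (hfc t ht).symm

theorem monotoneOn_mul_exp_of_neg_mul_le_deriv {D : Set ℝ} (hD : Convex ℝ D) {f f' : ℝ → ℝ}
    {k : ℝ} (hf : ∀ t ∈ D, HasDerivAt f (f' t) t) (hf' : ∀ t ∈ D, -k * f t ≤ f' t) :
    MonotoneOn (fun t => f t * exp (k * t)) D := by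
  have hderiv : ∀ t ∈ D, HasDerivAt (fun t => f t * exp (k * t))
      ((f' t + k * f t) * exp (k * t)) t := fun t ht => by
    have hexp : HasDerivAt (fun t => exp (k * t)) (exp (k * t) * k) t := by
      simpa using ((hasDerivAt_id t).const_mul k).exp
    exact ((hf t ht).mul hexp).congr_deriv (by ring)
  refine monotoneOn_of_hasDerivWithinAt_nonneg hD
    (fun t ht => (hderiv t ht).continuousAt.continuousWithinAt)
    (fun t ht => (hderiv t (interior_subset ht)).hasDerivWithinAt)
    (fun t ht => mul_nonneg ?_ (exp_pos _).le)
  linarith [hf' t (interior_subset ht)]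

theorem le_exp_mul_of_neg_mul_le_deriv {f f' : ℝ → ℝ} {k t s : ℝ}
    (hf : ∀ x ∈ Icc t s, HasDerivAt f (f' x) x) (hf' : ∀ x ∈ Icc t s, -k * f x ≤ f' x)
    (hts : t ≤ s) : f t ≤ exp (k * (s - t)) * f s := by
  have hmono : f t * exp (k * t) ≤ f s * exp (k * s) :=
    monotoneOn_mul_exp_of_neg_mul_le_deriv (convex_Icc t s) hf hf'
      (left_mem_Icc.2 hts) (right_mem_Icc.2 hts) hts
  have hsplit : exp (k * s) = exp (k * (s - t)) * exp (k * t) := by rw [← exp_add]; ring_nf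
  rw [hsplit, ← mul_assoc, mul_comm (f s)] at hmono
  exact le_of_mul_le_mul_right hmono (exp_pos _)

theorem mul_le_sub_of_le_deriv {g g' : ℝ → ℝ} {c t s : ℝ} (hts : t ≤ s)
    (hg : ∀ x ∈ Icc t s, HasDerivAt g (g' x) x) (hc : ∀ x ∈ Icc t s, c ≤ g' x) :
    c * (s - t) ≤ g s - g t := by
  have hline : ∀ x, HasDerivAt (fun x => g t + c * (x - t)) c x := fun x => by
    simpa using ((hasDerivAt_id x).sub_const t).const_mul c |>.const_add (g t)
  have hcomp := image_le_of_deriv_right_le_deriv_boundary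
    (fun x _ => (hline x).continuousAt.continuousWithinAt)
    (fun x _ => (hline x).hasDerivWithinAt) (by simp)
    (fun x hx => (hg x hx).continuousAt.continuousWithinAt)
    (fun x hx => (hg x (Ico_subset_Icc_self hx)).hasDerivWithinAt)
    (fun x hx => hc x (Ico_subset_Icc_self hx)) (right_mem_Icc.2 hts)
  linarith

theorem tendsto_zero_of_mul_le_deriv_of_tendsto {f f' g g' : ℝ → ℝ} {k m L : ℝ} (hm : 0 < m)
    (hf0 : ∀ t, 0 ≤ t → 0 ≤ f t)
    (hf : ∀ t, 0 ≤ t → HasDerivAt f (f' t) t) (hf' : ∀ t, 0 ≤ t → -k * f t ≤ f' t)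
    (hg : ∀ t, 0 ≤ t → HasDerivAt g (g' t) t) (hg' : ∀ t, 0 ≤ t → m * f t ≤ g' t)
    (hgL : Tendsto g atTop (𝓝 L)) : Tendsto f atTop (𝓝 0) := by
  have hbound : ∀ t, 0 ≤ t → f t ≤ exp |k| / m * (g (t + 1) - g t) := by
    intro t ht
    have hfs : ∀ s ∈ Icc t (t + 1), f t ≤ exp |k| * f s := fun s hs => by
      refine (le_exp_mul_of_neg_mul_le_deriv (fun x hx => hf x (ht.trans hx.1))
        (fun x hx => hf' x (ht.trans hx.1)) hs.1).trans ?_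
      refine mul_le_mul_of_nonneg_right (exp_le_exp.2 ?_) (hf0 s (ht.trans hs.1))
      nlinarith [le_abs_self k, neg_abs_le k, hs.1, hs.2]
    have hincr := mul_le_sub_of_le_deriv (c := m * f t / exp |k|)
      (le_add_of_nonneg_right zero_le_one) (fun x hx => hg x (ht.trans hx.1)) fun x hx => by
        rw [div_le_iff₀ (exp_pos _)]
        nlinarith [mul_le_mul_of_nonneg_left (hfs x hx) hm.le,
          mul_le_mul_of_nonneg_left (hg' x (ht.trans hx.1)) (exp_pos |k|).le]
    rw [add_sub_cancel_left, mul_one, div_le_iff₀ (exp_pos _)] at hincr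
    rw [div_mul_eq_mul_div, le_div_iff₀ hm]
    linarith
  have hincr : Tendsto (fun t => exp |k| / m * (g (t + 1) - g t)) atTop (𝓝 0) := by
    simpa using ((hgL.comp (tendsto_atTop_add_const_right _ 1 tendsto_id)).sub hgL).const_mul
      (exp |k| / m)
  refine squeeze_zero' ?_ ?_ hincr
  · filter_upwards [eventually_ge_atTop 0] with t ht using hf0 t ht
  · filter_upwards [eventually_ge_atTop 0] with t ht using hbound t ht

theorem hasDerivAt_conserved {μ : ℝ → ℝ} {KH α kd YB YP ms mP a b t : ℝ} {X B S P : ℝ → ℝ}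
    (hcoefμ : 1 / YP + a - b / YB = 0) (hcoef : mP + b * α * kd - a * kd - b * ms = 0)
    (hODE : HasDerivAt X (-KH * X t + α * kd * B t) t ∧
      HasDerivAt B ((μ (S t) - kd) * B t) t ∧
      HasDerivAt S (-(μ (S t) / YB + ms) * B t + KH * X t) t ∧
      HasDerivAt P ((μ (S t) / YP + mP) * B t) t) :
    HasDerivAt (fun t => P t + b * X t + a * B t + b * S t) 0 t := by
  obtain ⟨hX, hB, hS, hP⟩ := hODE
  refine (((hP.add (hX.const_mul b)).add (hB.const_mul a)).add (hS.const_mul b)).congr_deriv ?_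
  linear_combination (μ (S t) * B t) * hcoefμ + B t * hcoef

theorem conserved_coeffs {α kd YB YP ms mP a b : ℝ} (hkd : kd ≠ 0) (hYB : YB ≠ 0)
    (hYP : YP ≠ 0) (hD : 1 - YB * (α - ms / kd) ≠ 0)
    (ha : a = (YP * mP + kd * YB * (α - ms / kd)) / (kd * YP * (1 - YB * (α - ms / kd))))
    (hb : b = YB * (YP * mP + kd) / (kd * YP * (1 - YB * (α - ms / kd)))) :
    1 / YP + a - b / YB = 0 ∧ mP + b * α * kd - a * kd - b * ms = 0 := by
  subst ha hb
  have hDkd : kd * (1 - YB * (α - ms / kd)) = kd - YB * kd * α + YB * ms := by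
    field_simp
    ring
  -- abstracted so that `field_simp` treats the denominator as an atom known to be nonzero
  generalize 1 - YB * (α - ms / kd) = D at *
  constructor
  · field_simp
    linear_combination hDkd
  · field_simp
    linear_combination mP * YP * hDkd

theorem tendsto_zero_of_growth_rate_nonneg {μ : ℝ → ℝ} {kd YP mP Pstar : ℝ} {B S P : ℝ → ℝ}
    (hμ0 : μ 0 = 0) (hμpos : ∀ x, 0 < x → 0 < μ x) (hYP : 0 < YP) (hmP : 0 < mP)
    (hB0 : ∀ t, 0 ≤ t → 0 ≤ B t) (hS0 : ∀ t, 0 ≤ t → 0 ≤ S t)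
    (hB : ∀ t, 0 ≤ t → HasDerivAt B ((μ (S t) - kd) * B t) t)
    (hP : ∀ t, 0 ≤ t → HasDerivAt P ((μ (S t) / YP + mP) * B t) t)
    (hPlim : Tendsto P atTop (𝓝 Pstar)) : Tendsto B atTop (𝓝 0) := by
  have hμB (t : ℝ) (ht : 0 ≤ t) : 0 ≤ μ (S t) * B t := by
    refine mul_nonneg ?_ (hB0 t ht)
    rcases (hS0 t ht).eq_or_lt with h | h
    · rw [← h, hμ0]
    · exact (hμpos _ h).le
  refine tendsto_zero_of_mul_le_deriv_of_tendsto (k := kd) hmP hB0 hB (fun t ht => ?_) hP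
    (fun t ht => ?_) hPlim
  · linarith [hμB t ht]
  · have : 0 ≤ μ (S t) / YP * B t := by
      rw [div_mul_eq_mul_div]
      exact div_nonneg (hμB t ht) hYP.le
    linarith

theorem stmt_13_general (μ : ℝ → ℝ) (KH α kd YB YP ms mP sstar Pstar : ℝ)
    (X B S P : ℝ → ℝ)
    (hμ0 : μ 0 = 0) (hμpos : ∀ x, 0 < x → 0 < μ x)
    (hkd : 0 < kd)
    (hKH : 0 < KH) (hα1 : α < 1)
    (hYB : 0 < YB) (hYB1 : YB < 1) (hYP : 0 < YP)
    (hms : 0 < ms) (hmP : 0 < mP)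
    (hpos : ∀ t, 0 ≤ t → 0 ≤ X t ∧ 0 ≤ B t ∧ 0 ≤ S t ∧ 0 ≤ P t)
    (hODE : ∀ t, 0 ≤ t →
      HasDerivAt X (-KH * X t + α * kd * B t) t ∧
      HasDerivAt B ((μ (S t) - kd) * B t) t ∧
      HasDerivAt S (-(μ (S t) / YB + ms) * B t + KH * X t) t ∧
      HasDerivAt P ((μ (S t) / YP + mP) * B t) t)
    (hS : Filter.Tendsto S Filter.atTop (nhds sstar))
    (hP : Filter.Tendsto P Filter.atTop (nhds Pstar)) :
    Pstar = P 0
        + (YP * mP + kd * YB * (α - ms / kd)) /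
            (kd * YP * (1 - YB * (α - ms / kd))) * B 0
        + YB * (YP * mP + kd) / (kd * YP * (1 - YB * (α - ms / kd)))
            * (X 0 + S 0 - sstar) ∧
      0 < YB * (YP * mP + kd) / (kd * YP * (1 - YB * (α - ms / kd))) := by
  have hD : 0 < 1 - YB * (α - ms / kd) := by nlinarith [div_pos hms hkd]
  set a := (YP * mP + kd * YB * (α - ms / kd)) / (kd * YP * (1 - YB * (α - ms / kd))) with ha
  set b := YB * (YP * mP + kd) / (kd * YP * (1 - YB * (α - ms / kd))) with hb
  have hb_pos : 0 < b := by positivity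
  obtain ⟨hcoefμ, hcoef⟩ := conserved_coeffs hkd.ne' hYB.ne' hYP.ne' hD.ne' ha hb
  have hF' (t : ℝ) (ht : 0 ≤ t) := hasDerivAt_conserved hcoefμ hcoef (hODE t ht)
  have hF (t : ℝ) (ht : 0 ≤ t) :
      P t + b * X t + a * B t + b * S t = P 0 + b * X 0 + a * B 0 + b * S 0 :=
    constant_of_has_deriv_right_zero (fun x hx => (hF' x hx.1).continuousAt.continuousWithinAt)
      (fun x hx => (hF' x hx.1).hasDerivWithinAt) t ⟨ht, le_rfl⟩
  have hB : Tendsto B atTop (𝓝 0) :=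
    tendsto_zero_of_growth_rate_nonneg hμ0 hμpos hYP hmP (fun t ht => (hpos t ht).2.1)
      (fun t ht => (hpos t ht).2.2.1) (fun t ht => (hODE t ht).2.1)
      (fun t ht => (hODE t ht).2.2.2) hP
  set L := (P 0 + b * X 0 + a * B 0 + b * S 0 - Pstar - b * sstar) / b
  have hX : Tendsto X atTop (𝓝 L) := by
    have := (((tendsto_const_nhds (x := P 0 + b * X 0 + a * B 0 + b * S 0)).sub hP).sub
      (hB.const_mul a)).sub (hS.const_mul b) |>.div_const b
    rw [mul_zero, sub_zero] at this
    refine this.congr' ?_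
    filter_upwards [eventually_ge_atTop 0] with t ht
    rw [← hF t ht]
    field_simp
    ring
  have hL : -KH * L + α * kd * 0 = 0 := eq_zero_of_tendsto_of_tendsto_deriv
    (eventually_atTop.2 ⟨0, fun t ht => (hODE t ht).1⟩) hX
    ((hX.const_mul (-KH)).add (hB.const_mul (α * kd)))
  have hL0 : L = 0 := by simpa [hKH.ne'] using hL
  exact ⟨by linear_combination -((div_eq_zero_iff.1 hL0).resolve_right hb_pos.ne'), hb_pos⟩

/-- Formula for the limit of the product: `P* = P0 + a B0 + b (X0 + s0 - s*)`
with explicit positive constant `b`. -/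
theorem stmt_13 (μ : ℝ → ℝ) (KH α kd YB YP ms mP sstar Pstar : ℝ)
    (X B S P : ℝ → ℝ)
    (hμ : ContDiff ℝ 1 μ) (hμ0 : μ 0 = 0) (hμpos : ∀ x, 0 < x → 0 < μ x)
    (hkd : 0 < kd) (hkdmax : ∃ x, kd < μ x)
    (hKH : 0 < KH) (hα0 : 0 < α) (hα1 : α < 1)
    (hYB : 0 < YB) (hYB1 : YB < 1) (hYP : 0 < YP) (hYP1 : YP < 1)
    (hms : 0 < ms) (hmP : 0 < mP)
    (hpos : ∀ t, 0 ≤ t → 0 ≤ X t ∧ 0 ≤ B t ∧ 0 ≤ S t ∧ 0 ≤ P t)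
    (hODE : ∀ t, 0 ≤ t →
      HasDerivAt X (-KH * X t + α * kd * B t) t ∧
      HasDerivAt B ((μ (S t) - kd) * B t) t ∧
      HasDerivAt S (-(μ (S t) / YB + ms) * B t + KH * X t) t ∧
      HasDerivAt P ((μ (S t) / YP + mP) * B t) t)
    (hS : Filter.Tendsto S Filter.atTop (nhds sstar))
    (hP : Filter.Tendsto P Filter.atTop (nhds Pstar)) :
    Pstar = P 0
        + (YP * mP + kd * YB * (α - ms / kd)) /
            (kd * YP * (1 - YB * (α - ms / kd))) * B 0
        + YB * (YP * mP + kd) / (kd * YP * (1 - YB * (α - ms / kd)))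
            * (X 0 + S 0 - sstar) ∧
      0 < YB * (YP * mP + kd) / (kd * YP * (1 - YB * (α - ms / kd))) :=
  stmt_13_general μ KH α kd YB YP ms mP sstar Pstar X B S P hμ0 hμpos hkd hKH hα1 hYB hYB1 hYP hms
    hmP hpos hODE hS hP
end

section
/- The asymptotic limit s* of the substrate satisfies μ(s*) ≤ k_d, i.e. s* belongs to the set S = {s ≥ 0 : μ(s) ≤ k_d}. -/
/-- The asymptotic limit `s*` of the substrate satisfies `μ(s*) ≤ k_d`,
i.e. `s*` belongs to `S = {s ≥ 0 : μ(s) ≤ k_d}`. -/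
theorem stmt_16 (μ : ℝ → ℝ) (KH α kd YB ms sstar : ℝ) (X B S : ℝ → ℝ)
    (hμ : ContDiff ℝ 1 μ) (hμ0 : μ 0 = 0) (hμpos : ∀ x, 0 < x → 0 < μ x)
    (hkd : 0 < kd) (hKH : 0 < KH) (hα0 : 0 < α) (hα1 : α < 1)
    (hYB : 0 < YB) (hYB1 : YB < 1) (hms : 0 < ms)
    (hpos : ∀ t, 0 ≤ t → 0 ≤ X t ∧ 0 ≤ S t)
    (hBpos : ∀ t, 0 ≤ t → 0 < B t)
    (hODE : ∀ t, 0 ≤ t →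
      HasDerivAt X (-KH * X t + α * kd * B t) t ∧
      HasDerivAt B ((μ (S t) - kd) * B t) t ∧
      HasDerivAt S (-(μ (S t) / YB + ms) * B t + KH * X t) t)
    (hBlim : Filter.Tendsto B Filter.atTop (nhds 0))
    (hSlim : Filter.Tendsto S Filter.atTop (nhds sstar))
    (hsstar : 0 ≤ sstar) :
    sstar ∈ {s : ℝ | 0 ≤ s ∧ μ s ≤ kd} := by
  refine ⟨hsstar, ?_⟩
  by_contra h
  push_neg at h
  -- eventually μ (S t) > kd
  have hcont : ContinuousAt μ sstar := hμ.continuous.continuousAt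
  have hev : ∀ᶠ t in Filter.atTop, kd < μ (S t) :=
    hSlim.eventually (hcont.eventually_mem (isOpen_Ioi.mem_nhds h))
  obtain ⟨T₀, hT₀⟩ := hev.exists_forall_of_atTop
  set T := max T₀ 0 with hT
  have hT0 : (0:ℝ) ≤ T := le_max_right _ _
  -- B is strictly monotone on Ici T
  have hmono : StrictMonoOn B (Set.Ici T) := by
    apply strictMonoOn_of_deriv_pos (convex_Ici T)
    · exact fun t ht => ((hODE t (le_trans hT0 ht)).2.1.continuousAt).continuousWithinAt
    · intro t ht
      rw [interior_Ici] at ht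
      have ht0 : (0:ℝ) ≤ t := le_of_lt (lt_of_le_of_lt hT0 ht)
      rw [(hODE t ht0).2.1.deriv]
      have h1 : kd < μ (S t) := hT₀ t (le_trans (le_max_left _ _) ht.le)
      exact mul_pos (by linarith) (hBpos t ht0)
  -- contradiction with B → 0
  have hBT : 0 < B T := hBpos T hT0
  have := (hBlim.eventually (eventually_lt_nhds hBT)).exists_forall_of_atTop
  obtain ⟨T₁, hT₁⟩ := this
  set t := max (T + 1) T₁ with ht
  have h1 : B t < B T := hT₁ t (le_max_right _ _)
  have hTt : T < t := lt_of_lt_of_le (by linarith) (le_max_left _ _)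
  have h2 : B T < B t := hmono Set.self_mem_Ici (Set.mem_Ici.2 hTt.le) hTt
  linarith
end

section
/- Along solutions with B(t) > 0, the variable z(t) = (X(t) + s(t) - s*)/B(t) + φ, with φ = (μ(s*)/Y_{B/s} - (α k_d - m_s))/(μ(s*) - k_d), satisfies dz/dt = -γ(μ(s) - μ(s*)) - (μ(s) - k_d)·z, where γ = (k_d(1 - α Y_{B/s}) + Y_{B/s} m_s)/(Y_{B/s}(k_d - μ(s*))) > 0. -/
/-!
Write `N = X + s - s*`. Along the system, `N' = (α k_d - μ(s)/Y_{B/s} - m_s) B` and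
`B' = (μ(s) - k_d) B`, so the quotient rule gives
`(N/B)' = (α k_d - μ(s)/Y_{B/s} - m_s) - (μ(s) - k_d) N/B`.
The constant `φ` is chosen so that `α k_d - μ/Y_{B/s} - m_s + (μ - k_d) φ`, an affine function
of `μ = μ(s)`, vanishes at `μ = μ(s*)`; its slope is `-γ`.
-/

theorem HasDerivAt.div_of_hasDerivAt_mul_self {N B : ℝ → ℝ} {c r t : ℝ}
    (hN : HasDerivAt N (c * B t) t) (hB : HasDerivAt B (r * B t) t) (hBt : B t ≠ 0) :
    HasDerivAt (fun τ => N τ / B τ) (c - r * (N t / B t)) t :=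
  (hN.div hB hBt).congr_deriv (by field_simp)

theorem gamma_pos {α kd YB ms μs : ℝ} (hkd : 0 < kd) (hα1 : α < 1) (hYB : 0 < YB)
    (hYB1 : YB < 1) (hms : 0 < ms) (hμs : μs < kd) :
    0 < (kd * (1 - α * YB) + YB * ms) / (YB * (kd - μs)) := by
  have hαYB : α * YB < 1 := by nlinarith
  have hden : 0 < kd - μs := by linarith
  apply div_pos <;> positivity

theorem affine_rate_eq_neg_gamma_mul {α kd YB ms μs m : ℝ} (hYB : YB ≠ 0) (hμs : μs ≠ kd) :
    α * kd - m / YB - ms + (m - kd) * ((μs / YB - (α * kd - ms)) / (μs - kd))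
      = -((kd * (1 - α * YB) + YB * ms) / (YB * (kd - μs))) * (m - μs) := by
  have h₁ : μs - kd ≠ 0 := sub_ne_zero.mpr hμs
  have h₂ : kd - μs ≠ 0 := sub_ne_zero.mpr hμs.symm
  field_simp
  ring

theorem stmt_18_general (μ : ℝ → ℝ) (KH α kd YB ms sstar : ℝ) (X B S : ℝ → ℝ)
    (hkd : 0 < kd) (hα1 : α < 1)
    (hYB : 0 < YB) (hYB1 : YB < 1) (hms : 0 < ms)
    (hμs : μ sstar < kd)
    (hBpos : ∀ t, 0 ≤ t → 0 < B t)
    (hODE : ∀ t, 0 ≤ t →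
      HasDerivAt X (-KH * X t + α * kd * B t) t ∧
      HasDerivAt B ((μ (S t) - kd) * B t) t ∧
      HasDerivAt S (-(μ (S t) / YB + ms) * B t + KH * X t) t) :
    0 < (kd * (1 - α * YB) + YB * ms) / (YB * (kd - μ sstar)) ∧
    ∀ t, 0 ≤ t →
      HasDerivAt
        (fun τ => (X τ + S τ - sstar) / B τ
          + (μ sstar / YB - (α * kd - ms)) / (μ sstar - kd))
        (-((kd * (1 - α * YB) + YB * ms) / (YB * (kd - μ sstar)))
            * (μ (S t) - μ sstar)
          - (μ (S t) - kd) *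
            ((X t + S t - sstar) / B t
              + (μ sstar / YB - (α * kd - ms)) / (μ sstar - kd))) t := by
  refine ⟨gamma_pos hkd hα1 hYB hYB1 hms hμs, fun t ht => ?_⟩
  obtain ⟨hX, hB, hS⟩ := hODE t ht
  have hN : HasDerivAt (fun τ => X τ + S τ - sstar)
      ((α * kd - μ (S t) / YB - ms) * B t) t :=
    ((hX.add hS).sub_const sstar).congr_deriv (by ring)
  refine ((hN.div_of_hasDerivAt_mul_self hB (hBpos t ht).ne').add_const
    ((μ sstar / YB - (α * kd - ms)) / (μ sstar - kd))).congr_deriv ?_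
  linear_combination
    affine_rate_eq_neg_gamma_mul (α := α) (kd := kd) (ms := ms) (m := μ (S t)) hYB.ne' hμs.ne

/-- The change of variable `z = (X + s - s*)/B + φ` satisfies
`dz/dt = -γ(μ(s) - μ(s*)) - (μ(s) - k_d) z`, with `γ > 0`. -/
theorem stmt_18 (μ : ℝ → ℝ) (KH α kd YB ms sstar : ℝ) (X B S : ℝ → ℝ)
    (hμ : ContDiff ℝ 1 μ) (hμ0 : μ 0 = 0) (hμpos : ∀ x, 0 < x → 0 < μ x)
    (hkd : 0 < kd) (hKH : 0 < KH) (hα0 : 0 ≤ α) (hα1 : α < 1)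
    (hYB : 0 < YB) (hYB1 : YB < 1) (hms : 0 < ms)
    (hsstar : 0 ≤ sstar) (hμs : μ sstar < kd)
    (hBpos : ∀ t, 0 ≤ t → 0 < B t)
    (hODE : ∀ t, 0 ≤ t →
      HasDerivAt X (-KH * X t + α * kd * B t) t ∧
      HasDerivAt B ((μ (S t) - kd) * B t) t ∧
      HasDerivAt S (-(μ (S t) / YB + ms) * B t + KH * X t) t) :
    0 < (kd * (1 - α * YB) + YB * ms) / (YB * (kd - μ sstar)) ∧
    ∀ t, 0 ≤ t →
      HasDerivAt
        (fun τ => (X τ + S τ - sstar) / B τ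
          + (μ sstar / YB - (α * kd - ms)) / (μ sstar - kd))
        (-((kd * (1 - α * YB) + YB * ms) / (YB * (kd - μ sstar)))
            * (μ (S t) - μ sstar)
          - (μ (S t) - kd) *
            ((X t + S t - sstar) / B t
              + (μ sstar / YB - (α * kd - ms)) / (μ sstar - kd))) t :=
  stmt_18_general μ KH α kd YB ms sstar X B S hkd hα1 hYB hYB1 hms hμs hBpos hODE
end
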